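/- arXiv:1706.01031 — 4 statements merged into one kernel-verified Lean document; each statement's English description precedes it below -/
import Mathlib

section
/- Let (D,d) be a separable metric space and S a countable dense subset. Then every nonnegative function f : D → ℝ that is 1-Lipschitz and bounded by 1 is the pointwise supremum of the countable family of functions of the form x ↦ q·max(1 − p·d(x,s), 0) with s ∈ S, p, q nonnegative rationals, q ≤ 1, pq ≤ 1, that lie pointwise below f. -/
/-!
With `p = q⁻¹` the member `q·max(1 − p·d(·,s), 0)` of the family is the tent `max(q − d(·,s), 0)`,
which lies below a nonnegative `1`-Lipschitz `f` as soon as `q ≤ f s`. Taking `s ∈ S` close to `x`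
and a rational `q` just below `f s` makes the value of the tent at `x` as close to `f x` as we like.
-/

theorem mul_max_one_sub_inv_mul {q d : ℝ} (hq : 0 ≤ q) (hd : 0 ≤ d) :
    q * max (1 - q⁻¹ * d) 0 = max (q - d) 0 := by
  rcases hq.eq_or_lt with rfl | hq
  · simpa using hd
  · rw [mul_max_of_nonneg _ _ hq.le, mul_zero, mul_sub, mul_one, mul_inv_cancel_left₀ hq.ne']

section
variable {α : Type*} [PseudoMetricSpace α] {f : α → ℝ}

theorem LipschitzWith.max_sub_dist_le (hf0 : ∀ z, 0 ≤ f z) (hlip : LipschitzWith 1 f)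
    {s : α} {q : ℝ} (hq : q ≤ f s) (z : α) : max (q - dist z s) 0 ≤ f z := by
  have := hlip.le_add_mul s z
  rw [NNReal.coe_one, one_mul, dist_comm] at this
  exact max_le (by linarith) (hf0 z)

theorem Dense.exists_rat_add_dist_lt (hlip : LipschitzWith 1 f) {S : Set α} (hS : Dense S)
    {x : α} {b : ℝ} (hb : b < f x) : ∃ s ∈ S, ∃ q : ℚ, b + dist x s < q ∧ (q : ℝ) < f s := by
  obtain ⟨s, hsS, hxs⟩ := hS.exists_dist_lt x (half_pos (sub_pos.2 hb))
  have hfs := hlip.le_add_mul x s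
  rw [NNReal.coe_one, one_mul] at hfs
  obtain ⟨q, hbq, hqf⟩ := exists_rat_btwn (show b + dist x s < f s by linarith)
  exact ⟨s, hsS, q, hbq, hqf⟩

end

theorem stmt3_general {D : Type*} [MetricSpace D] (S : Set D)
    (hSd : Dense S) (f : D → ℝ) (hf0 : ∀ x, 0 ≤ f x) (hf1 : ∀ x, f x ≤ 1)
    (hlip : LipschitzWith 1 f) (x : D) :
    f x = sSup {y : ℝ | ∃ (s : D) (p q : ℚ), s ∈ S ∧ 0 ≤ p ∧ 0 ≤ q ∧ q ≤ 1 ∧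
      p * q ≤ 1 ∧ (∀ z, (q : ℝ) * max (1 - (p : ℝ) * dist z s) 0 ≤ f z) ∧
      y = (q : ℝ) * max (1 - (p : ℝ) * dist x s) 0} := by
  set A := {y : ℝ | ∃ (s : D) (p q : ℚ), s ∈ S ∧ 0 ≤ p ∧ 0 ≤ q ∧ q ≤ 1 ∧
      p * q ≤ 1 ∧ (∀ z, (q : ℝ) * max (1 - (p : ℝ) * dist z s) 0 ≤ f z) ∧
      y = (q : ℝ) * max (1 - (p : ℝ) * dist x s) 0}
  have tent_mem {s : D} {q : ℚ} (hs : s ∈ S) (hq : 0 ≤ q) (hqf : (q : ℝ) ≤ f s) :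
      max (q - dist x s) 0 ∈ A := by
    have hq' : (0 : ℝ) ≤ q := Rat.cast_nonneg.2 hq
    refine ⟨s, q⁻¹, q, hs, inv_nonneg.2 hq, hq, by exact_mod_cast hqf.trans (hf1 s),
      inv_mul_le_one, fun z ↦ ?_, ?_⟩ <;>
      rw [Rat.cast_inv, mul_max_one_sub_inv_mul hq' dist_nonneg]
    exact hlip.max_sub_dist_le hf0 hqf z
  obtain ⟨s₀, hs₀, -⟩ := hSd.exists_dist_lt x one_pos
  have zero_mem : (0 : ℝ) ∈ A := by
    simpa using tent_mem hs₀ le_rfl (by simpa using hf0 s₀)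
  have upper : f x ∈ upperBounds A := by
    rintro _ ⟨s, p, q, -, -, -, -, -, hle, rfl⟩
    exact hle x
  refine (IsLUB.csSup_eq ⟨upper, fun c hc ↦ le_of_forall_lt fun b hb ↦ ?_⟩ ⟨0, zero_mem⟩).symm
  rcases lt_or_ge b 0 with hb0 | hb0
  · exact hb0.trans_le (hc zero_mem)
  obtain ⟨s, hs, q, hbq, hqf⟩ := hSd.exists_rat_add_dist_lt hlip hb
  have hq : (0 : ℝ) ≤ q := (add_nonneg hb0 dist_nonneg).trans hbq.le
  calc b < max (q - dist x s) 0 := lt_max_of_lt_left (by linarith)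
    _ ≤ c := hc (tent_mem hs (Rat.cast_nonneg.1 hq) hqf.le)

/-- On a separable metric space with countable dense subset `S`, every
nonnegative `1`-Lipschitz function `f` bounded by `1` is the pointwise supremum
of the functions `x ↦ q·max(1 − p·d(x,s), 0)` (with `s ∈ S`, `p, q ≥ 0`
rational, `q ≤ 1`, `p·q ≤ 1`) that lie pointwise below `f`. -/
theorem stmt3 {D : Type*} [MetricSpace D] (S : Set D) (hSc : S.Countable)
    (hSd : Dense S) (f : D → ℝ) (hf0 : ∀ x, 0 ≤ f x) (hf1 : ∀ x, f x ≤ 1)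
    (hlip : LipschitzWith 1 f) (x : D) :
    f x = sSup {y : ℝ | ∃ (s : D) (p q : ℚ), s ∈ S ∧ 0 ≤ p ∧ 0 ≤ q ∧ q ≤ 1 ∧
      p * q ≤ 1 ∧ (∀ z, (q : ℝ) * max (1 - (p : ℝ) * dist z s) 0 ≤ f z) ∧
      y = (q : ℝ) * max (1 - (p : ℝ) * dist x s) 0} :=
  stmt3_general S hSd f hf0 hf1 hlip x
end

section
/- Let D be a separable metric space, and for each n let X_n be a random variable and S_n^(1), S_n^(2) be D-valued bootstrap replicates, identically distributed and independent conditionally on X_n, with regular conditional distribution Pr^{S_n^(1)|X_n}. Let Q be a fixed Borel probability measure on D. If the joint law of (S_n^(1), S_n^(2)) converges weakly to Q ⊗ Q, then for every bounded Lipschitz function f : D → ℝ, the conditional expectation E[f(S_n^(1)) | X_n] converges to ∫ f dQ in L², and hence in probability. -/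
open MeasureTheory ProbabilityTheory Filter Topology BoundedContinuousFunction

/-- `S 1, …, S M` are identically distributed and independent conditionally on
`X`, with common regular conditional distribution `κ (X ·)` given `X`:
conditionally on `X`, the `S i` are i.i.d. with law `κ (X ·)`. This is encoded
by testing against bounded measurable functions of `X` and of the `S i`. -/
def CondIID {Ω 𝒳 D : Type*} [MeasurableSpace Ω] [MeasurableSpace 𝒳]
    [MeasurableSpace D] (Pr : Measure Ω) (X : Ω → 𝒳) {M : ℕ}
    (S : Fin M → Ω → D) (κ : Kernel 𝒳 D) : Prop :=
  ∀ (φ : 𝒳 → ℝ) (ψ : Fin M → D → ℝ), Measurable φ → (∀ x, |φ x| ≤ 1) →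
    (∀ i, Measurable (ψ i)) → (∀ i x, |ψ i x| ≤ 1) →
    ∫ ω, φ (X ω) * ∏ i, ψ i (S i ω) ∂Pr
      = ∫ ω, φ (X ω) * ∏ i, ∫ x, ψ i x ∂(κ (X ω)) ∂Pr

/-! Write `T n = E[f(S n 0) | X n]` and `c = ∫ f dQ`. Conditional independence turns the first two
moments of `T n` into `E[f(S n 0)]` and `E[f(S n 0) f(S n 1)]`, which by weak convergence tend to
`c` and `c²`; hence `E[(T n - c)²] = E[T n²] - 2c E[T n] + c² → 0`, and Chebyshev's inequality
gives convergence in probability. -/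

section Moments

variable {Ω : Type*} [MeasurableSpace Ω] {μ : Measure Ω}

theorem integral_sub_const_sq [IsProbabilityMeasure μ] {T : Ω → ℝ} (hT : MemLp T 2 μ) (c : ℝ) :
    ∫ ω, (T ω - c) ^ 2 ∂μ = ∫ ω, T ω ^ 2 ∂μ - 2 * c * ∫ ω, T ω ∂μ + c ^ 2 := by
  have hT1 : Integrable (fun ω => 2 * c * T ω) μ := (hT.integrable one_le_two).const_mul _
  have expand : (fun ω => (T ω - c) ^ 2) = fun ω => (T ω ^ 2 - 2 * c * T ω) + c ^ 2 := by
    funext ω; ring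
  simp only [expand]
  rw [integral_add (f := fun ω => T ω ^ 2 - 2 * c * T ω) (hT.integrable_sq.sub hT1)
    (integrable_const _), integral_sub hT.integrable_sq hT1, integral_const_mul, integral_const,
    probReal_univ, one_smul]

theorem tendsto_integral_sub_const_sq [IsProbabilityMeasure μ] {ι : Type*} {l : Filter ι}
    {T : ι → Ω → ℝ} {c : ℝ} (hT : ∀ i, MemLp (T i) 2 μ)
    (hmean : Tendsto (fun i => ∫ ω, T i ω ∂μ) l (𝓝 c))
    (hsq : Tendsto (fun i => ∫ ω, T i ω ^ 2 ∂μ) l (𝓝 (c ^ 2))) :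
    Tendsto (fun i => ∫ ω, (T i ω - c) ^ 2 ∂μ) l (𝓝 0) := by
  have h := (hsq.sub (hmean.const_mul (2 * c))).add_const (c ^ 2)
  rw [show c ^ 2 - 2 * c * c + c ^ 2 = 0 by ring] at h
  simpa only [integral_sub_const_sq (hT _)] using h

theorem tendstoInMeasure_of_tendsto_integral_sq [IsFiniteMeasure μ] {ι : Type*} {l : Filter ι}
    {T : ι → Ω → ℝ} {g : Ω → ℝ} (hint_sq : ∀ i, Integrable (fun ω => (T i ω - g ω) ^ 2) μ)
    (hT : Tendsto (fun i => ∫ ω, (T i ω - g ω) ^ 2 ∂μ) l (𝓝 0)) :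
    TendstoInMeasure μ T l g := by
  rw [tendstoInMeasure_iff_measureReal_dist]
  intro ε hε
  have hε2 : 0 < ε ^ 2 := by positivity
  have chebyshev : ∀ i, μ.real {ω | ε ≤ dist (T i ω) (g ω)}
      ≤ (∫ ω, (T i ω - g ω) ^ 2 ∂μ) / ε ^ 2 := by
    intro i
    have hsub : {ω | ε ≤ dist (T i ω) (g ω)} ⊆ {ω | ε ^ 2 ≤ (T i ω - g ω) ^ 2} := fun ω hω => by
      simpa [Real.dist_eq, sq_abs] using pow_le_pow_left₀ hε.le hω 2
    rw [le_div_iff₀' hε2]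
    exact (mul_le_mul_of_nonneg_left (measureReal_mono hsub) hε2.le).trans
      (mul_meas_ge_le_integral_of_nonneg (ae_of_all _ fun ω => sq_nonneg _) (hint_sq i) _)
  have hbound := hT.div_const (ε ^ 2)
  rw [zero_div] at hbound
  exact squeeze_zero (fun i => measureReal_nonneg) chebyshev hbound

end Moments

theorem memLp_integral_kernel_comp {Ω 𝒳 D : Type*} [MeasurableSpace Ω] [MeasurableSpace 𝒳]
    [MeasurableSpace D] {μ : Measure Ω} [IsFiniteMeasure μ] {κ : Kernel 𝒳 D} [IsMarkovKernel κ]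
    {X : Ω → 𝒳} (hX : Measurable X) {f : D → ℝ} (hf : Measurable f) {C : ℝ}
    (hfC : ∀ x, |f x| ≤ C) (p : ENNReal) :
    MemLp (fun ω => ∫ x, f x ∂(κ (X ω))) p μ := by
  refine MemLp.of_bound
    ((hf.stronglyMeasurable.integral_kernel (κ := κ)).comp_measurable hX).aestronglyMeasurable C
    (ae_of_all _ fun ω => ?_)
  simpa using norm_integral_le_of_norm_le_const (μ := κ (X ω))
    (ae_of_all _ fun x => (Real.norm_eq_abs _).trans_le (hfC x))

namespace CondIID

variable {Ω 𝒳 D : Type*} [MeasurableSpace Ω] [MeasurableSpace 𝒳] [MeasurableSpace D]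
  {Pr : Measure Ω} {X : Ω → 𝒳} {M : ℕ} {S : Fin M → Ω → D} {κ : Kernel 𝒳 D}

/-- The defining identity of `CondIID`, freed from the normalisation `|ψ i| ≤ 1` by rescaling. -/
theorem integral_prod_eq (h : CondIID Pr X S κ) {ψ : Fin M → D → ℝ}
    (hψ : ∀ i, Measurable (ψ i)) {C : ℝ} (hC : ∀ i x, |ψ i x| ≤ C) :
    ∫ ω, ∏ i, ψ i (S i ω) ∂Pr = ∫ ω, ∏ i, ∫ x, ψ i x ∂(κ (X ω)) ∂Pr := by
  set r := (max C 1)⁻¹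
  have hr : 0 < r := inv_pos.mpr (lt_max_of_lt_right one_pos)
  have hrψ : ∀ i x, |r * ψ i x| ≤ 1 := fun i x => by
    rw [abs_mul, abs_of_pos hr]
    exact (inv_mul_le_one₀ (lt_max_of_lt_right one_pos)).mpr ((hC i x).trans (le_max_left _ _))
  have key := h (fun _ => 1) (fun i x => r * ψ i x) measurable_const (fun _ => by simp)
    (fun i => (hψ i).const_mul r) hrψ
  simp only [one_mul, integral_const_mul, Finset.prod_mul_distrib, Finset.prod_const,
    Finset.card_univ, Fintype.card_fin] at key
  exact mul_left_cancel₀ (pow_ne_zero M hr.ne') key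

theorem integral_comp_eq [IsMarkovKernel κ] (h : CondIID Pr X S κ) (i : Fin M) {f : D → ℝ}
    (hf : Measurable f) {C : ℝ} (hfC : ∀ x, |f x| ≤ C) :
    ∫ ω, f (S i ω) ∂Pr = ∫ ω, ∫ x, f x ∂(κ (X ω)) ∂Pr := by
  have hψ : ∀ (ν : Measure D) [IsProbabilityMeasure ν] (j : Fin M),
      ∫ y, (if j = i then f y else 1) ∂ν = if j = i then ∫ y, f y ∂ν else 1 := fun ν _ j => by
    split_ifs <;> simp
  have key := h.integral_prod_eq (ψ := fun j y => if j = i then f y else 1)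
    (fun j => by split_ifs <;> fun_prop) (C := max C 1)
    (fun j x => by split_ifs <;> simp [(hfC x).trans (le_max_left _ _)])
  simpa only [hψ, Finset.prod_ite_eq', Finset.mem_univ, if_true] using key

theorem integral_mul_eq_integral_sq {S : Fin 2 → Ω → D} (h : CondIID Pr X S κ) {f : D → ℝ}
    (hf : Measurable f) {C : ℝ} (hfC : ∀ x, |f x| ≤ C) :
    ∫ ω, f (S 0 ω) * f (S 1 ω) ∂Pr = ∫ ω, (∫ x, f x ∂(κ (X ω))) ^ 2 ∂Pr := by
  simpa [Fin.prod_univ_two, sq] using h.integral_prod_eq (fun _ => hf) (fun _ => hfC)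

end CondIID

theorem stmt6_general {Ω 𝒳 D : Type*} [MeasurableSpace Ω] [MeasurableSpace 𝒳]
    [MetricSpace D] [MeasurableSpace D] [BorelSpace D]
    (Pr : Measure Ω) [IsProbabilityMeasure Pr]
    (X : ℕ → Ω → 𝒳) (hX : ∀ n, Measurable (X n))
    (S : ℕ → Fin 2 → Ω → D)
    (κ : ℕ → Kernel 𝒳 D) (hκ : ∀ n, IsMarkovKernel (κ n))
    (hcond : ∀ n, CondIID Pr (X n) (S n) (κ n))
    (Q : Measure D) [IsProbabilityMeasure Q]
    (hweak : ∀ g : (D × D) →ᵇ ℝ,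
      Tendsto (fun n => ∫ ω, g (S n 0 ω, S n 1 ω) ∂Pr) atTop
        (𝓝 (∫ p, g p ∂(Q.prod Q))))
    (f : D → ℝ) (C : ℝ) (L : NNReal) (hfb : ∀ x, |f x| ≤ C)
    (hfl : LipschitzWith L f) :
    Tendsto (fun n =>
        ∫ ω, (∫ x, f x ∂(κ n (X n ω)) - ∫ x, f x ∂Q) ^ 2 ∂Pr) atTop (𝓝 0) ∧
      TendstoInMeasure Pr (fun n ω => ∫ x, f x ∂(κ n (X n ω))) atTop
        (fun _ => ∫ x, f x ∂Q) := by
  have hf : Measurable f := hfl.continuous.measurable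
  have hT : ∀ n, MemLp (fun ω => ∫ x, f x ∂(κ n (X n ω))) 2 Pr := fun n =>
    memLp_integral_kernel_comp (κ := κ n) (hX n) hf hfb 2
  let F : D →ᵇ ℝ := .ofNormedAddCommGroup f hfl.continuous C fun x => by simpa using hfb x
  let F₁ : (D × D) →ᵇ ℝ := F.compContinuous ⟨Prod.fst, continuous_fst⟩
  let F₂ : (D × D) →ᵇ ℝ := F.compContinuous ⟨Prod.snd, continuous_snd⟩
  have hmean : Tendsto (fun n => ∫ ω, ∫ x, f x ∂(κ n (X n ω)) ∂Pr) atTop (𝓝 (∫ x, f x ∂Q)) := by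
    simpa [F₁, F, integral_fun_fst, (hcond _).integral_comp_eq 0 hf hfb] using hweak F₁
  have hsq : Tendsto (fun n => ∫ ω, (∫ x, f x ∂(κ n (X n ω))) ^ 2 ∂Pr) atTop
      (𝓝 ((∫ x, f x ∂Q) ^ 2)) := by
    simpa [F₁, F₂, F, integral_prod_mul, sq, (hcond _).integral_mul_eq_integral_sq hf hfb]
      using hweak (F₁ * F₂)
  have hL2 := tendsto_integral_sub_const_sq hT hmean hsq
  exact ⟨hL2, tendstoInMeasure_of_tendsto_integral_sq
    (fun n => ((hT n).sub (memLp_const _)).integrable_sq) hL2⟩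

/-- If the joint law of two bootstrap replicates `(S n 0, S n 1)`, identically
distributed and conditionally independent given the data `X n` with regular
conditional distribution `κ n (X n ·)`, converges weakly to `Q ⊗ Q`, then for
every bounded Lipschitz `f : D → ℝ` the conditional expectation
`E[f(S n 0) | X n] = ∫ f dκ n (X n ·)` converges to `∫ f dQ` in `L²` and hence
in probability. -/
theorem stmt6 {Ω 𝒳 D : Type*} [MeasurableSpace Ω] [MeasurableSpace 𝒳]
    [MetricSpace D] [MeasurableSpace D] [BorelSpace D]
    [TopologicalSpace.SeparableSpace D]
    (Pr : Measure Ω) [IsProbabilityMeasure Pr]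
    (X : ℕ → Ω → 𝒳) (hX : ∀ n, Measurable (X n))
    (S : ℕ → Fin 2 → Ω → D) (hS : ∀ n i, Measurable (S n i))
    (κ : ℕ → Kernel 𝒳 D) (hκ : ∀ n, IsMarkovKernel (κ n))
    (hcond : ∀ n, CondIID Pr (X n) (S n) (κ n))
    (Q : Measure D) [IsProbabilityMeasure Q]
    (hweak : ∀ g : (D × D) →ᵇ ℝ,
      Tendsto (fun n => ∫ ω, g (S n 0 ω, S n 1 ω) ∂Pr) atTop
        (𝓝 (∫ p, g p ∂(Q.prod Q))))
    (f : D → ℝ) (C : ℝ) (L : NNReal) (hfb : ∀ x, |f x| ≤ C)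
    (hfl : LipschitzWith L f) :
    Tendsto (fun n =>
        ∫ ω, (∫ x, f x ∂(κ n (X n ω)) - ∫ x, f x ∂Q) ^ 2 ∂Pr) atTop (𝓝 0) ∧
      TendstoInMeasure Pr (fun n ω => ∫ x, f x ∂(κ n (X n ω))) atTop
        (fun _ => ∫ x, f x ∂Q) :=
  stmt6_general Pr X hX S κ hκ hcond Q hweak f C L hfb hfl
end

section
/- Let D be a separable metric space and suppose S_n = S_n(X_n) converges weakly to a random variable S in D, and that S_n^(1), S_n^(2) are bootstrap replicates identically distributed and conditionally independent given X_n. If the joint law of (S_n, S_n^(1), S_n^(2)) converges weakly to the product Pr^S ⊗ Pr^S ⊗ Pr^S, then d_BL(Pr^{S_n^(1)|X_n}, Pr^{S_n}) → 0 in probability. -/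
/-!
For a fixed test function `u`, conditional independence of the two replicates identifies the first
two moments of `∫ u ∂κₙ(Xₙ)` with `E u(Sₙ⁽¹⁾)` and `E u(Sₙ⁽¹⁾) u(Sₙ⁽²⁾)`, which by the joint weak
convergence tend to `∫ u ∂μS` and `(∫ u ∂μS)²`. So the variance of `∫ u ∂κₙ(Xₙ)` vanishes and, by
Chebyshev, `∫ u ∂κₙ(Xₙ) - E u(Sₙ) → 0` in probability.

To control the supremum over the bounded Lipschitz ball, note that `μS` is concentrated up to `ε`
on a totally bounded set `A`. On `A` the ball is uniformly approximated by finitely many of its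
elements; off `A` the error is dominated by a cutoff `w`, itself a test function, whose integrals
under `κₙ(Xₙ)` and the law of `Sₙ` are eventually small. A union bound over these finitely many
test functions concludes.
-/

open MeasureTheory ProbabilityTheory Filter Topology BoundedContinuousFunction

/-- The bounded Lipschitz distance between two measures. -/
noncomputable def dBL {D : Type*} [MeasurableSpace D] [PseudoMetricSpace D]
    (P Q : Measure D) : ℝ :=
  ⨆ h : {h : D → ℝ // (∀ x, |h x| ≤ 1) ∧ LipschitzWith 1 h},
    |∫ x, h.1 x ∂P - ∫ x, h.1 x ∂Q|

open scoped ENNReal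

def boundedLipschitzBall (D : Type*) [PseudoMetricSpace D] : Set (D → ℝ) :=
  {h | (∀ x, |h x| ≤ 1) ∧ LipschitzWith 1 h}

section BoundedLipschitz

variable {D : Type*} [PseudoMetricSpace D]

lemma dBL_nonneg [MeasurableSpace D] (P Q : Measure D) : 0 ≤ dBL P Q :=
  Real.iSup_nonneg fun _ => abs_nonneg _

lemma dBL_le [MeasurableSpace D] {P Q : Measure D} {B : ℝ}
    (hB : ∀ h ∈ boundedLipschitzBall D, |∫ x, h x ∂P - ∫ x, h x ∂Q| ≤ B) : dBL P Q ≤ B :=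
  have : Nonempty {h : D → ℝ // (∀ x, |h x| ≤ 1) ∧ LipschitzWith 1 h} :=
    ⟨⟨0, fun _ => by simp, LipschitzWith.const' 0⟩⟩
  ciSup_le fun h => hB h.1 h.2

lemma abs_sub_le_abs_sub_add_two_mul_dist {h g : D → ℝ} (hh : LipschitzWith 1 h)
    (hg : LipschitzWith 1 g) (x y : D) : |h x - g x| ≤ |h y - g y| + 2 * dist x y := by
  have := (hh.sub hg).dist_le_mul x y
  rw [Real.dist_eq] at this
  norm_num at this
  linarith [abs_sub_abs_le_abs_sub (h x - g x) (h y - g y)]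

/-- It suffices to approximate the values on a finite `ε / 3`-net `t` of `A`, and these range over
a bounded, hence totally bounded, subset of `t → ℝ`. -/
lemma exists_finite_approx_on_totallyBounded {A : Set D} (hA : TotallyBounded A)
    {ε : ℝ} (hε : 0 < ε) :
    ∃ G ⊆ boundedLipschitzBall D, G.Finite ∧
      ∀ h ∈ boundedLipschitzBall D, ∃ g ∈ G, ∀ a ∈ A, |h a - g a| < ε := by
  obtain ⟨t, htfin, hAt⟩ := Metric.totallyBounded_iff.mp hA (ε / 3) (by positivity)
  have := htfin.fintype
  let restrict : (D → ℝ) → (t → ℝ) := fun h p => h p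
  have hbounded : restrict '' boundedLipschitzBall D ⊆ Metric.closedBall 0 1 := by
    rintro _ ⟨h, hh, rfl⟩
    simpa [pi_norm_le_iff_of_nonneg, restrict] using fun p _ => hh.1 p
  obtain ⟨G, hGsub, hGfin, hcover⟩ := Set.exists_subset_image_finite_and.mp
    (Metric.finite_approx_of_totallyBounded
      ((isCompact_closedBall 0 1).totallyBounded.subset hbounded) (ε / 3) (by positivity))
  refine ⟨G, hGsub, hGfin, fun h hh => ?_⟩
  obtain ⟨g, hgG, hhg⟩ : ∃ g ∈ G, dist (restrict h) (restrict g) < ε / 3 := by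
    simpa using hcover (Set.mem_image_of_mem restrict hh)
  refine ⟨g, hgG, fun a ha => ?_⟩
  obtain ⟨p, hpt, hap⟩ : ∃ p ∈ t, dist a p < ε / 3 := by simpa using hAt ha
  have hp : |h p - g p| < ε / 3 := by
    simpa [restrict, Real.dist_eq] using (dist_pi_lt_iff (by positivity)).mp hhg ⟨p, hpt⟩
  linarith [abs_sub_le_abs_sub_add_two_mul_dist hh.2 (hGsub hgG).2 a p]

end BoundedLipschitz

section Approximation

variable {D : Type*} [PseudoMetricSpace D] [MeasurableSpace D] [OpensMeasurableSpace D]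

lemma integrable_of_mem_boundedLipschitzBall (μ : Measure D) [IsFiniteMeasure μ] {h : D → ℝ}
    (hh : h ∈ boundedLipschitzBall D) : Integrable h μ :=
  .of_bound hh.2.continuous.aestronglyMeasurable 1 (.of_forall hh.1)

lemma abs_integral_sub_integral_le {α : Type*} [MeasurableSpace α] {μ : Measure α}
    {f g b : α → ℝ} (hf : Integrable f μ) (hg : Integrable g μ) (hb : Integrable b μ)
    (hfg : ∀ x, |f x - g x| ≤ b x) : |∫ x, f x ∂μ - ∫ x, g x ∂μ| ≤ ∫ x, b x ∂μ := by
  rw [← integral_sub hf hg]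
  exact abs_integral_le_integral_abs.trans (integral_mono (hf.sub hg).abs hb hfg)

lemma dBL_le_of_forall_exists_abs_sub_le {P Q : Measure D} [IsProbabilityMeasure P]
    [IsProbabilityMeasure Q] {G : Set (D → ℝ)} (hG : G ⊆ boundedLipschitzBall D)
    {w : D → ℝ} (hwP : Integrable w P) (hwQ : Integrable w Q) {c B : ℝ}
    (happrox : ∀ h ∈ boundedLipschitzBall D, ∃ g ∈ G, ∀ x, |h x - g x| ≤ c + w x)
    (hB : ∀ g ∈ G, |∫ x, g x ∂P - ∫ x, g x ∂Q| ≤ B) :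
    dBL P Q ≤ B + 2 * c + ∫ x, w x ∂P + ∫ x, w x ∂Q := by
  refine dBL_le fun h hh => ?_
  obtain ⟨g, hgG, hhg⟩ := happrox h hh
  have approx (μ : Measure D) [IsProbabilityMeasure μ] (hw : Integrable w μ) :
      |∫ x, h x ∂μ - ∫ x, g x ∂μ| ≤ c + ∫ x, w x ∂μ := by
    have := abs_integral_sub_integral_le (b := fun x => c + w x)
      (integrable_of_mem_boundedLipschitzBall μ hh)
      (integrable_of_mem_boundedLipschitzBall μ (hG hgG)) ((integrable_const c).add hw) hhg
    rwa [integral_add (integrable_const c) hw, integral_const, probReal_univ, one_smul] at this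
  have hP := approx P hwP
  have hQ := approx Q hwQ
  rw [abs_sub_comm] at hQ
  linarith [hB g hgG, abs_sub_le (∫ x, h x ∂P) (∫ x, g x ∂P) (∫ x, h x ∂Q),
    abs_sub_le (∫ x, g x ∂P) (∫ x, g x ∂Q) (∫ x, h x ∂Q)]

/-- The image of `μ` in the completion of `D`, a Polish space, is tight. -/
lemma exists_isClosed_totallyBounded_measure_compl_le [TopologicalSpace.SeparableSpace D]
    (μ : Measure D) [IsFiniteMeasure μ] {c : ℝ≥0∞} (hc : 0 < c) :
    ∃ A : Set D, IsClosed A ∧ TotallyBounded A ∧ μ Aᶜ ≤ c := by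
  let E := UniformSpace.Completion D
  borelize E
  have : SecondCountableTopology E := UniformSpace.secondCountable_of_separable E
  obtain ⟨K, hK, hKc⟩ := isTightMeasureSet_iff_exists_isCompact_measure_compl_le.mp
    (isTightMeasureSet_singleton (μ := μ.map ((↑) : D → E))) c hc
  have hcoe : Continuous ((↑) : D → E) := UniformSpace.Completion.continuous_coe D
  refine ⟨(↑) ⁻¹' K, hK.isClosed.preimage hcoe,
    totallyBounded_preimage (UniformSpace.Completion.isUniformInducing_coe D) hK.totallyBounded, ?_⟩
  simpa [Measure.map_apply hcoe.measurable hK.isClosed.measurableSet.compl] using hKc _ rfl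

/-- The cutoff `w` vanishes on a totally bounded set of large `μ`-measure and equals `1` away from
its `ε / 3`-thickening. -/
lemma exists_finite_approx_up_to_cutoff [TopologicalSpace.SeparableSpace D]
    (μ : Measure D) [IsFiniteMeasure μ] {ε : ℝ} (hε : 0 < ε) :
    ∃ G ⊆ boundedLipschitzBall D, G.Finite ∧ ∃ w : D →ᵇ ℝ, (∀ x, 0 ≤ w x ∧ w x ≤ 1) ∧
      ∫ x, w x ∂μ ≤ ε ∧ ∀ h ∈ boundedLipschitzBall D, ∃ g ∈ G, ∀ x, |h x - g x| ≤ ε + 2 * w x := by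
  have hr : 0 < ε / 3 := by positivity
  obtain ⟨A, hAclosed, hAtb, hμA⟩ :=
    exists_isClosed_totallyBounded_measure_compl_le μ (ENNReal.ofReal_pos.mpr hε)
  obtain ⟨G, hG, hGfin, hGA⟩ := exists_finite_approx_on_totallyBounded hAtb hr
  have hind (x : D) : 0 ≤ (thickenedIndicator hr A x : ℝ) ∧ (thickenedIndicator hr A x : ℝ) ≤ 1 :=
    ⟨by positivity, mod_cast thickenedIndicator_le_one hr A x⟩
  let w : D →ᵇ ℝ := .ofNormedAddCommGroup (fun x => 1 - (thickenedIndicator hr A x : ℝ))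
    (by fun_prop) 1 fun x => by rw [Real.norm_eq_abs, abs_le]; constructor <;> linarith [hind x]
  have hw (x : D) : w x = 1 - thickenedIndicator hr A x := rfl
  have hw01 (x : D) : 0 ≤ w x ∧ w x ≤ 1 := by rw [hw]; constructor <;> linarith [hind x]
  refine ⟨G, hG, hGfin, w, hw01, ?_, fun h hh => ?_⟩
  · have hwA : ∀ x, w x ≤ Aᶜ.indicator 1 x := by
      intro x
      by_cases hx : x ∈ A
      · simp [hw, hx, thickenedIndicator_one hr A hx]
      · simpa [hx] using (hw01 x).2
    calc ∫ x, w x ∂μ ≤ ∫ x, Aᶜ.indicator 1 x ∂μ :=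
          integral_mono (w.integrable μ)
            ((integrable_const 1).indicator hAclosed.measurableSet.compl) hwA
      _ = μ.real Aᶜ := integral_indicator_one hAclosed.measurableSet.compl
      _ ≤ ε := ENNReal.toReal_le_of_le_ofReal hε.le hμA
  obtain ⟨g, hgG, hgA⟩ := hGA h hh
  refine ⟨g, hgG, fun x => ?_⟩
  by_cases hx : x ∈ Metric.thickening (ε / 3) A
  · obtain ⟨a, ha, hxa⟩ := Metric.mem_thickening_iff.mp hx
    linarith [abs_sub_le_abs_sub_add_two_mul_dist hh.2 (hG hgG).2 x a, hgA a ha, (hw01 x).1]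
  · have hwx : w x = 1 := by simp [hw, thickenedIndicator_zero hr A hx]
    linarith [abs_sub (h x) (g x), hh.1 x, (hG hgG).1 x]

lemma dBL_lt_of_approx_up_to_cutoff {P Q : Measure D} [IsProbabilityMeasure P]
    [IsProbabilityMeasure Q] {G : Set (D → ℝ)} (hG : G ⊆ boundedLipschitzBall D) {w : D →ᵇ ℝ}
    {ε : ℝ} (happrox : ∀ h ∈ boundedLipschitzBall D, ∃ g ∈ G, ∀ x, |h x - g x| ≤ ε / 16 + 2 * w x)
    (hwQ : ∫ x, w x ∂Q < ε / 8)
    (hclose : ∀ u ∈ insert ⇑w G, |∫ x, u x ∂P - ∫ x, u x ∂Q| < ε / 16) :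
    dBL P Q < ε := by
  have hdBL := dBL_le_of_forall_exists_abs_sub_le hG ((w.integrable P).const_mul 2)
    ((w.integrable Q).const_mul 2) happrox fun g hg => (hclose g (Set.mem_insert_of_mem _ hg)).le
  rw [integral_const_mul, integral_const_mul] at hdBL
  have hw := hclose w (Set.mem_insert _ _)
  linarith [(abs_sub_lt_iff.mp hw).1, (abs_nonneg _).trans_lt hw]

end Approximation

lemma tendsto_measure_of_eventually_subset_biUnion {α β ι : Type*} [MeasurableSpace α]
    {μ : Measure α} {l : Filter β} {s : β → Set α} {I : Set ι} (hI : I.Finite)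
    {t : β → ι → Set α} (hst : ∀ᶠ n in l, s n ⊆ ⋃ i ∈ I, t n i)
    (ht : ∀ i ∈ I, Tendsto (fun n => μ (t n i)) l (𝓝 0)) :
    Tendsto (fun n => μ (s n)) l (𝓝 0) := by
  have hsum : Tendsto (fun n => ∑ i ∈ hI.toFinset, μ (t n i)) l (𝓝 0) := by
    simpa using tendsto_finsetSum hI.toFinset fun i hi => ht i (hI.mem_toFinset.mp hi)
  refine tendsto_of_tendsto_of_tendsto_of_le_of_le' tendsto_const_nhds hsum
    (.of_forall fun _ => zero_le) ?_
  filter_upwards [hst] with n hn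
  exact (measure_mono (hn.trans (by simp))).trans (measure_biUnion_finset_le _ _)

lemma integral_prod_prod_mul_comp {α β γ : Type*} [MeasurableSpace α] [MeasurableSpace β]
    [MeasurableSpace γ] {μ : Measure α} {ν : Measure β} {ρ : Measure γ} [IsProbabilityMeasure μ]
    [SigmaFinite ν] [SigmaFinite ρ] (f : β → ℝ) (g : γ → ℝ) :
    ∫ p : α × β × γ, f p.2.1 * g p.2.2 ∂μ.prod (ν.prod ρ) = (∫ x, f x ∂ν) * ∫ x, g x ∂ρ := by
  rw [← integral_prod_mul f g]
  simpa using integral_prod_mul (μ := μ) (ν := ν.prod ρ) (fun _ => (1 : ℝ)) fun q => f q.1 * g q.2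

lemma tendsto_integral_comp_mul_comp_of_tendsto_prod {Ω α β γ : Type*} [MeasurableSpace Ω]
    [TopologicalSpace α] [MeasurableSpace α] [TopologicalSpace β] [MeasurableSpace β]
    [TopologicalSpace γ] [MeasurableSpace γ] {Pr : Measure Ω} {ι : Type*} {l : Filter ι}
    {Y₀ : ι → Ω → α} {Y₁ : ι → Ω → β} {Y₂ : ι → Ω → γ} {μ : Measure α} {ν : Measure β}
    {ρ : Measure γ} [IsProbabilityMeasure μ] [SigmaFinite ν] [SigmaFinite ρ]
    (h : ∀ g : (α × β × γ) →ᵇ ℝ, Tendsto (fun n => ∫ ω, g (Y₀ n ω, Y₁ n ω, Y₂ n ω) ∂Pr) l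
      (𝓝 (∫ p, g p ∂μ.prod (ν.prod ρ))))
    (u : β →ᵇ ℝ) (v : γ →ᵇ ℝ) :
    Tendsto (fun n => ∫ ω, u (Y₁ n ω) * v (Y₂ n ω) ∂Pr) l
      (𝓝 ((∫ x, u x ∂ν) * ∫ x, v x ∂ρ)) := by
  have h := h (u.compContinuous ⟨fun p => p.2.1, by fun_prop⟩ *
    v.compContinuous ⟨fun p => p.2.2, by fun_prop⟩)
  simp only [BoundedContinuousFunction.coe_mul, BoundedContinuousFunction.coe_compContinuous,
    ContinuousMap.coe_mk, Pi.mul_apply, Function.comp_apply] at h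
  rwa [integral_prod_prod_mul_comp] at h

/-- Chebyshev's inequality, centred at `μ[Y n]`, which is eventually within `t / 2` of `c n`. -/
lemma tendstoInMeasure_sub_of_tendsto_variance {Ω ι : Type*} [MeasurableSpace Ω]
    {μ : Measure Ω} [IsProbabilityMeasure μ] {l : Filter ι} {Y : ι → Ω → ℝ} {c : ι → ℝ}
    (hY : ∀ n, MemLp (Y n) 2 μ) (hvar : Tendsto (fun n => variance (Y n) μ) l (𝓝 0))
    (hmean : Tendsto (fun n => μ[Y n] - c n) l (𝓝 0)) :
    TendstoInMeasure μ (fun n ω => Y n ω - c n) l 0 := by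
  rw [tendstoInMeasure_iff_dist]
  intro t ht
  have hlim : Tendsto (fun n => ENNReal.ofReal (variance (Y n) μ / (t / 2) ^ 2)) l (𝓝 0) := by
    simpa using ENNReal.tendsto_ofReal (hvar.div_const ((t / 2) ^ 2))
  refine tendsto_of_tendsto_of_tendsto_of_le_of_le' tendsto_const_nhds hlim
    (.of_forall fun _ => zero_le) ?_
  have habs : Tendsto (fun n => |μ[Y n] - c n|) l (𝓝 0) := by simpa using hmean.abs
  filter_upwards [habs.eventually_lt_const (half_pos ht)] with n hn
  refine (measure_mono fun ω hω => ?_).trans (meas_ge_le_variance_div_sq (hY n) (half_pos ht))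
  simp only [Set.mem_ofPred_eq, Pi.zero_apply, Real.dist_eq, sub_zero] at hω ⊢
  linarith [abs_sub_le (Y n ω) (μ[Y n]) (c n)]

section CondIID

variable {Ω 𝒳 D : Type*} [MeasurableSpace Ω] [MeasurableSpace 𝒳] [MeasurableSpace D]
  {Pr : Measure Ω} {X : Ω → 𝒳} {S : Fin 2 → Ω → D} {κ : Kernel 𝒳 D}

lemma CondIID.integral_comp_mul_comp (h : CondIID Pr X S κ) {u v : D → ℝ} (hu : Measurable u)
    (hu1 : ∀ x, |u x| ≤ 1) (hv : Measurable v) (hv1 : ∀ x, |v x| ≤ 1) :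
    ∫ ω, u (S 0 ω) * v (S 1 ω) ∂Pr
      = ∫ ω, (∫ x, u x ∂κ (X ω)) * ∫ x, v x ∂κ (X ω) ∂Pr := by
  simpa [Fin.prod_univ_two] using h (fun _ => 1) ![u, v] measurable_const (by simp)
    (fun i => by fin_cases i <;> assumption) (fun i => by fin_cases i <;> assumption)

lemma CondIID.integral_comp [IsMarkovKernel κ] (h : CondIID Pr X S κ) {u : D → ℝ}
    (hu : Measurable u) (hu1 : ∀ x, |u x| ≤ 1) :
    ∫ ω, u (S 0 ω) ∂Pr = ∫ ω, ∫ x, u x ∂κ (X ω) ∂Pr := by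
  simpa using h.integral_comp_mul_comp hu hu1 measurable_const (v := fun _ => 1) (by simp)

end CondIID

lemma tendstoInMeasure_integral_kernel_sub_integral {Ω 𝒳 D : Type*} [MeasurableSpace Ω]
    [MeasurableSpace 𝒳] [TopologicalSpace D] [MeasurableSpace D] [OpensMeasurableSpace D]
    {Pr : Measure Ω} [IsProbabilityMeasure Pr] {X : ℕ → Ω → 𝒳} (hX : ∀ n, Measurable (X n))
    {S : ℕ → Fin 2 → Ω → D} {κ : ℕ → Kernel 𝒳 D} (hκ : ∀ n, IsMarkovKernel (κ n))
    (hcond : ∀ n, CondIID Pr (X n) (S n) (κ n)) {Q : ℕ → Measure D}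
    {μS : Measure D} [IsProbabilityMeasure μS]
    (hQ : ∀ f : D →ᵇ ℝ, Tendsto (fun n => ∫ x, f x ∂Q n) atTop (𝓝 (∫ x, f x ∂μS)))
    (hmoment : ∀ u v : D →ᵇ ℝ, Tendsto (fun n => ∫ ω, u (S n 0 ω) * v (S n 1 ω) ∂Pr) atTop
      (𝓝 ((∫ x, u x ∂μS) * ∫ x, v x ∂μS)))
    {u : D → ℝ} (hu : Continuous u) (hu1 : ∀ x, |u x| ≤ 1) :
    TendstoInMeasure Pr (fun n ω => ∫ x, u x ∂κ n (X n ω) - ∫ x, u x ∂Q n) atTop 0 := by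
  let uB : D →ᵇ ℝ := .ofNormedAddCommGroup u hu 1 fun x => (Real.norm_eq_abs _).trans_le (hu1 x)
  have hY (n : ℕ) : MemLp (fun ω => ∫ x, u x ∂κ n (X n ω)) 2 Pr := by
    have := hκ n
    refine .of_bound (hu.measurable.stronglyMeasurable.integral_kernel.measurable.comp
      (hX n)).aestronglyMeasurable 1 (.of_forall fun ω => ?_)
    simpa using norm_integral_le_of_norm_le_const (μ := κ n (X n ω))
      (.of_forall fun x => (Real.norm_eq_abs _).trans_le (hu1 x))
  have hmean (n : ℕ) : ∫ ω, ∫ x, u x ∂κ n (X n ω) ∂Pr = ∫ ω, u (S n 0 ω) ∂Pr :=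
    have := hκ n
    ((hcond n).integral_comp hu.measurable hu1).symm
  have hsq (n : ℕ) : ∫ ω, (∫ x, u x ∂κ n (X n ω)) ^ 2 ∂Pr
      = ∫ ω, u (S n 0 ω) * u (S n 1 ω) ∂Pr := by
    simp [sq, (hcond n).integral_comp_mul_comp hu.measurable hu1 hu.measurable hu1]
  have hfirst : Tendsto (fun n => ∫ ω, u (S n 0 ω) ∂Pr) atTop (𝓝 (∫ x, u x ∂μS)) := by
    simpa [uB] using hmoment uB 1
  refine tendstoInMeasure_sub_of_tendsto_variance hY ?_ ?_
  · simp_rw [variance_eq_sub (hY _), Pi.pow_apply, hsq, hmean]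
    simpa [uB, sq] using (hmoment uB uB).sub (hfirst.pow 2)
  · simp_rw [hmean]
    simpa [uB] using hfirst.sub (hQ uB)

theorem stmt10_general {Ω 𝒳 D : Type*} [MeasurableSpace Ω] [MeasurableSpace 𝒳]
    [MetricSpace D] [MeasurableSpace D] [BorelSpace D]
    [TopologicalSpace.SeparableSpace D]
    (Pr : Measure Ω) [IsProbabilityMeasure Pr]
    (X : ℕ → Ω → 𝒳) (hX : ∀ n, Measurable (X n))
    (Sn : ℕ → Ω → D) (hSn : ∀ n, Measurable (Sn n))
    (S : ℕ → Fin 2 → Ω → D)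
    (κ : ℕ → Kernel 𝒳 D) (hκ : ∀ n, IsMarkovKernel (κ n))
    (hcond : ∀ n, CondIID Pr (X n) (S n) (κ n))
    (μS : Measure D) [IsProbabilityMeasure μS]
    (hSweak : ∀ f : D →ᵇ ℝ,
      Tendsto (fun n => ∫ ω, f (Sn n ω) ∂Pr) atTop (𝓝 (∫ x, f x ∂μS)))
    (hjoint : ∀ g : (D × D × D) →ᵇ ℝ,
      Tendsto (fun n => ∫ ω, g (Sn n ω, S n 0 ω, S n 1 ω) ∂Pr) atTop
        (𝓝 (∫ p, g p ∂(μS.prod (μS.prod μS))))) :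
    TendstoInMeasure Pr
      (fun n ω => dBL (κ n (X n ω)) (Measure.map (Sn n) Pr)) atTop
      (fun _ => 0) := by
  have hQ (n : ℕ) : IsProbabilityMeasure (Pr.map (Sn n)) :=
    Measure.isProbabilityMeasure_map (hSn n).aemeasurable
  have hweak (f : D →ᵇ ℝ) :
      Tendsto (fun n => ∫ x, f x ∂Pr.map (Sn n)) atTop (𝓝 (∫ x, f x ∂μS)) := by
    simpa only [integral_map (hSn _).aemeasurable f.continuous.aestronglyMeasurable] using hSweak f
  rw [tendstoInMeasure_iff_dist]
  intro ε hε
  obtain ⟨G, hG, hGfin, w, hw01, hwμ, happrox⟩ :=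
    exists_finite_approx_up_to_cutoff μS (ε := ε / 16) (by positivity)
  have hwQ : ∀ᶠ n in atTop, ∫ x, w x ∂Pr.map (Sn n) < ε / 8 :=
    (hweak w).eventually_lt_const (by linarith)
  have htest : ∀ u ∈ insert ⇑w G, Continuous u ∧ ∀ x, |u x| ≤ 1 := by
    rintro u (rfl | hu)
    · exact ⟨w.continuous, fun x => abs_le.mpr ⟨by linarith [hw01 x], (hw01 x).2⟩⟩
    · exact ⟨(hG hu).2.continuous, (hG hu).1⟩
  have hclose (u) (hu : u ∈ insert ⇑w G) := tendstoInMeasure_iff_dist.mp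
    (tendstoInMeasure_integral_kernel_sub_integral hX hκ hcond hweak
      (tendsto_integral_comp_mul_comp_of_tendsto_prod hjoint) (htest u hu).1 (htest u hu).2)
    (ε / 16) (by positivity)
  refine tendsto_measure_of_eventually_subset_biUnion (hGfin.insert ⇑w) ?_ hclose
  filter_upwards [hwQ] with n hwn ω hω
  by_contra hout
  simp only [Set.mem_iUnion, Set.mem_ofPred_eq, not_exists, not_le, Pi.zero_apply, Real.dist_eq,
    sub_zero] at hout hω
  have := hκ n
  rw [abs_of_nonneg (dBL_nonneg _ _)] at hω
  exact (dBL_lt_of_approx_up_to_cutoff hG happrox hwn hout).not_ge hω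

/-- If `S_n ⇝ S` and the joint law of `(S_n, S_n^{(1)}, S_n^{(2)})` converges
weakly to `Pr^S ⊗ Pr^S ⊗ Pr^S`, where the bootstrap replicates `S_n^{(1)},
S_n^{(2)}` are identically distributed and conditionally independent given the
data `X_n` with regular conditional distribution `κ n (X n ·)`, then
`d_BL(Pr^{S_n^{(1)} | X_n}, Pr^{S_n}) → 0` in probability. -/
theorem stmt10 {Ω 𝒳 D : Type*} [MeasurableSpace Ω] [MeasurableSpace 𝒳]
    [MetricSpace D] [MeasurableSpace D] [BorelSpace D]
    [TopologicalSpace.SeparableSpace D]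
    (Pr : Measure Ω) [IsProbabilityMeasure Pr]
    (X : ℕ → Ω → 𝒳) (hX : ∀ n, Measurable (X n))
    (Sn : ℕ → Ω → D) (hSn : ∀ n, Measurable (Sn n))
    (S : ℕ → Fin 2 → Ω → D) (hS : ∀ n i, Measurable (S n i))
    (κ : ℕ → Kernel 𝒳 D) (hκ : ∀ n, IsMarkovKernel (κ n))
    (hcond : ∀ n, CondIID Pr (X n) (S n) (κ n))
    (μS : Measure D) [IsProbabilityMeasure μS]
    (hSweak : ∀ f : D →ᵇ ℝ,
      Tendsto (fun n => ∫ ω, f (Sn n ω) ∂Pr) atTop (𝓝 (∫ x, f x ∂μS)))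
    (hjoint : ∀ g : (D × D × D) →ᵇ ℝ,
      Tendsto (fun n => ∫ ω, g (Sn n ω, S n 0 ω, S n 1 ω) ∂Pr) atTop
        (𝓝 (∫ p, g p ∂(μS.prod (μS.prod μS))))) :
    TendstoInMeasure Pr
      (fun n ω => dBL (κ n (X n ω)) (Measure.map (Sn n) Pr)) atTop
      (fun _ => 0) :=
  stmt10_general Pr X hX Sn hSn S κ hκ hcond μS hSweak hjoint
end

section
/- Let S_n be real-valued random variables converging weakly to S whose distribution function F is continuous. Suppose the random distribution functions F_n(x) = Pr(S_n^(1) ≤ x | X_n) satisfy sup_x |F_n(x) − F(x)| → 0 in probability. Then for every α ∈ (0,1), Pr( S_n ≥ F_n⁻¹(1−α) ) → α as n → ∞. -/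
open MeasureTheory Filter Topology BoundedContinuousFunction ProbabilityTheory Set

/-!
Write `q_n = F_n⁻¹(1 - α)` and fix a small `δ > 0`. Since `F` is continuous, there are points
`a < b` with `F a = 1 - α - δ` and `F b = 1 - α + δ`. Whenever `sup_x |F_n - F| < δ`, every `x`
with `F_n x ≥ 1 - α` lies above `a`, and `b` is such an `x`, so `a ≤ q_n ≤ b`. Outside an event
of vanishing probability, `{S_n ≥ b} ⊆ {S_n ≥ q_n} ⊆ {S_n ≥ a}`, and by the portmanteau theorem
(`S` has no atoms) the outer probabilities tend to `α - δ` and `α + δ`. Let `δ → 0`.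
-/

theorem nullSingletonClass_of_continuous_cdf (μ : Measure ℝ) [IsProbabilityMeasure μ]
    (h : Continuous (cdf μ)) : NullSingletonClass μ where
  measure_singleton a := by
    rw [← measure_cdf μ, StieltjesFunction.measure_singleton,
      h.continuousAt.continuousWithinAt.leftLim_eq, sub_self, ENNReal.ofReal_zero]

theorem mem_range_cdf_of_continuous {μ : Measure ℝ} [IsProbabilityMeasure μ]
    (h : Continuous (cdf μ)) {t : ℝ} (ht : t ∈ Ioo 0 1) : t ∈ range (cdf μ) :=
  mem_range_of_exists_le_of_exists_ge h
    ((tendsto_cdf_atBot μ).eventually (eventually_le_nhds ht.1)).exists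
    ((tendsto_cdf_atTop μ).eventually (eventually_ge_nhds ht.2)).exists

theorem measureReal_Ici_eq_one_sub_cdf (μ : Measure ℝ) [IsProbabilityMeasure μ]
    [NullSingletonClass μ] (c : ℝ) : μ.real (Ici c) = 1 - cdf μ c := by
  rw [← measureReal_congr Ioi_ae_eq_Ici, ← compl_Iic, probReal_compl_eq_one_sub measurableSet_Iic,
    cdf_eq_real]

theorem tendsto_measure_preimage_of_tendsto_integral {Ω X ι : Type*} [MeasurableSpace Ω]
    [MeasurableSpace X] [TopologicalSpace X] [OpensMeasurableSpace X] [HasOuterApproxClosed X]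
    {L : Filter ι} (P : Measure Ω) [IsProbabilityMeasure P] {Y : ι → Ω → X}
    (hY : ∀ i, Measurable (Y i)) (μ : Measure X) [IsProbabilityMeasure μ]
    (h : ∀ g : X →ᵇ ℝ, Tendsto (fun i => ∫ ω, g (Y i ω) ∂P) L (𝓝 (∫ x, g x ∂μ)))
    {E : Set X} (hE : MeasurableSet E) (hE' : μ (frontier E) = 0) :
    Tendsto (fun i => P (Y i ⁻¹' E)) L (𝓝 (μ E)) := by
  let P' : ProbabilityMeasure Ω := ⟨P, inferInstance⟩
  have hlaw : Tendsto (fun i => P'.map (hY i).aemeasurable) L (𝓝 ⟨μ, inferInstance⟩) := by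
    refine ProbabilityMeasure.tendsto_iff_forall_integral_tendsto.2 fun g => ?_
    convert h g using 2 with i
    exacts [integral_map (hY i).aemeasurable g.continuous.aestronglyMeasurable, rfl]
  have := ProbabilityMeasure.tendsto_measure_of_null_frontier_of_tendsto' hlaw hE'
  simp_rw [ProbabilityMeasure.map_apply' _ _ hE] at this
  exact this

theorem tendsto_measureReal_setOf_le_of_tendsto_integral {Ω : Type*} [MeasurableSpace Ω]
    (P : Measure Ω) [IsProbabilityMeasure P] {Y : ℕ → Ω → ℝ} (hY : ∀ n, Measurable (Y n))
    (μ : Measure ℝ) [IsProbabilityMeasure μ] [NullSingletonClass μ]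
    (h : ∀ g : ℝ →ᵇ ℝ, Tendsto (fun n => ∫ ω, g (Y n ω) ∂P) atTop (𝓝 (∫ x, g x ∂μ))) (c : ℝ) :
    Tendsto (fun n => P.real {ω | c ≤ Y n ω}) atTop (𝓝 (1 - cdf μ c)) := by
  rw [← measureReal_Ici_eq_one_sub_cdf]
  refine (ENNReal.tendsto_toReal (measure_ne_top μ _)).comp ?_
  refine tendsto_measure_preimage_of_tendsto_integral P hY μ h (E := Ici c) measurableSet_Ici ?_
  rw [frontier_Ici, measure_singleton]

theorem abs_sub_lt_of_iSup_abs_sub_lt {ι : Type*} {G F : ι → ℝ} (hG : ∀ i, G i ∈ Icc 0 1)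
    (hF : ∀ i, F i ∈ Icc 0 1) {δ : ℝ} (h : ⨆ i, |G i - F i| < δ) (i : ι) : |G i - F i| < δ := by
  refine (le_ciSup ⟨1, ?_⟩ i).trans_lt h
  rintro _ ⟨j, rfl⟩
  exact abs_sub_le_iff.2 ⟨by linarith [(hG j).2, (hF j).1], by linarith [(hG j).1, (hF j).2]⟩

theorem sInf_setOf_le_mem_Icc_of_abs_sub_lt {F G : ℝ → ℝ} (hF : Monotone F) {δ y a b : ℝ}
    (hG : ∀ x, |G x - F x| < δ) (ha : F a + δ ≤ y) (hb : y + δ ≤ F b) :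
    sInf {x | y ≤ G x} ∈ Icc a b := by
  have lower : a ∈ lowerBounds {x | y ≤ G x} := fun x hx => by
    by_contra! hxa
    linarith [hF hxa.le, (abs_lt.1 (hG x)).2, show y ≤ G x from hx]
  have hbmem : b ∈ {x | y ≤ G x} := by
    show y ≤ G b
    linarith [(abs_lt.1 (hG b)).1]
  exact ⟨le_csInf ⟨b, hbmem⟩ lower, csInf_le ⟨a, lower⟩ hbmem⟩

theorem measureReal_setOf_le_mem_Icc {Ω : Type*} [MeasurableSpace Ω] (P : Measure Ω)
    [IsFiniteMeasure P] {q S : Ω → ℝ} {B : Set Ω} {a b : ℝ} (hq : ∀ ω ∉ B, q ω ∈ Icc a b) :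
    P.real {ω | b ≤ S ω} - P.real B ≤ P.real {ω | q ω ≤ S ω} ∧
      P.real {ω | q ω ≤ S ω} ≤ P.real {ω | a ≤ S ω} + P.real B := by
  have hlow : {ω | b ≤ S ω} ⊆ {ω | q ω ≤ S ω} ∪ B := fun ω hω => by
    by_cases hB : ω ∈ B
    · exact Or.inr hB
    · exact Or.inl ((hq ω hB).2.trans hω)
  have hup : {ω | q ω ≤ S ω} ⊆ {ω | a ≤ S ω} ∪ B := fun ω hω => by
    by_cases hB : ω ∈ B
    · exact Or.inr hB
    · exact Or.inl ((hq ω hB).1.trans hω)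
  constructor
  · linarith [(measureReal_mono (μ := P) hlow).trans (measureReal_union_le _ B)]
  · exact (measureReal_mono hup).trans (measureReal_union_le _ B)

theorem tendsto_of_eventually_sandwich {ι : Type*} {L : Filter ι} {u : ι → ℝ} {a : ℝ}
    (h : ∀ᶠ ε in 𝓝[>] 0, ∃ l v : ι → ℝ, Tendsto l L (𝓝 (a - ε)) ∧ Tendsto v L (𝓝 (a + ε)) ∧
      ∀ i, l i ≤ u i ∧ u i ≤ v i) :
    Tendsto u L (𝓝 a) := by
  refine tendsto_order.2 ⟨fun a' ha' => ?_, fun b' hb' => ?_⟩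
  · obtain ⟨ε, ⟨l, v, hl, -, hluv⟩, hε⟩ := (h.and (Ioo_mem_nhdsGT (sub_pos.2 ha'))).exists
    filter_upwards [hl.eventually_const_lt (show a' < a - ε by linarith [hε.2])] with i hi
      using hi.trans_le (hluv i).1
  · obtain ⟨ε, ⟨l, v, -, hv, hluv⟩, hε⟩ := (h.and (Ioo_mem_nhdsGT (sub_pos.2 hb'))).exists
    filter_upwards [hv.eventually_lt_const (show a + ε < b' by linarith [hε.2])] with i hi
      using (hluv i).2.trans_lt hi

theorem stmt13_general {Ω : Type*} [MeasurableSpace Ω]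
    (Pr : Measure Ω) [IsProbabilityMeasure Pr]
    (Sn : ℕ → Ω → ℝ) (hSn : ∀ n, Measurable (Sn n))
    (μ : Measure ℝ) [IsProbabilityMeasure μ] (F : ℝ → ℝ)
    (hF : ∀ x, F x = (μ (Set.Iic x)).toReal) (hFcont : Continuous F)
    (hweak : ∀ g : ℝ →ᵇ ℝ,
      Tendsto (fun n => ∫ ω, g (Sn n ω) ∂Pr) atTop (𝓝 (∫ x, g x ∂μ)))
    (Fn : ℕ → Ω → ℝ → ℝ)
    (hFn01 : ∀ n ω x, Fn n ω x ∈ Set.Icc (0 : ℝ) 1)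
    (hsup : TendstoInMeasure Pr
      (fun n ω => ⨆ x : ℝ, |Fn n ω x - F x|) atTop (fun _ => 0))
    (α : ℝ) (hα : α ∈ Set.Ioo (0 : ℝ) 1) :
    Tendsto (fun n =>
        (Pr {ω | sInf {x : ℝ | 1 - α ≤ Fn n ω x} ≤ Sn n ω}).toReal)
      atTop (𝓝 α) := by
  obtain rfl : F = cdf μ := funext fun x => (hF x).trans (cdf_eq_real μ x).symm
  have := nullSingletonClass_of_continuous_cdf μ hFcont
  have hlaw := tendsto_measureReal_setOf_le_of_tendsto_integral Pr hSn μ hweak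
  obtain ⟨hα0, hα1⟩ := hα
  refine tendsto_of_eventually_sandwich ?_
  filter_upwards [Ioo_mem_nhdsGT (lt_min hα0 (sub_pos.2 hα1))] with δ ⟨hδ0, hδα⟩
  obtain ⟨a, ha⟩ := mem_range_cdf_of_continuous hFcont
    (t := 1 - α - δ) ⟨by linarith [min_le_right α (1 - α)], by linarith⟩
  obtain ⟨b, hb⟩ := mem_range_cdf_of_continuous hFcont
    (t := 1 - α + δ) ⟨by linarith, by linarith [min_le_left α (1 - α)]⟩
  set bad : ℕ → Set Ω := fun n => {ω | δ ≤ dist (⨆ x, |Fn n ω x - cdf μ x|) 0}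
  have hbad : Tendsto (fun n => Pr.real (bad n)) atTop (𝓝 0) :=
    (ENNReal.tendsto_toReal ENNReal.zero_ne_top).comp (tendstoInMeasure_iff_dist.1 hsup δ hδ0)
  have hgood (n : ℕ) (ω : Ω) (hω : ω ∉ bad n) : sInf {x | 1 - α ≤ Fn n ω x} ∈ Icc a b := by
    have hunif := abs_sub_lt_of_iSup_abs_sub_lt (hFn01 n ω)
      (fun x => ⟨cdf_nonneg μ x, cdf_le_one μ x⟩)
      ((le_abs_self _).trans_lt (by simpa [bad] using hω))
    exact sInf_setOf_le_mem_Icc_of_abs_sub_lt (cdf μ).mono hunif (by linarith) (by linarith)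
  refine ⟨fun n => Pr.real {ω | b ≤ Sn n ω} - Pr.real (bad n),
    fun n => Pr.real {ω | a ≤ Sn n ω} + Pr.real (bad n), ?_, ?_,
    fun n => measureReal_setOf_le_mem_Icc Pr (hgood n)⟩
  · convert (hlaw b).sub hbad using 2
    rw [hb]; ring
  · convert (hlaw a).add hbad using 2
    rw [ha]; ring

/-- If `S_n ⇝ S` where the distribution function `F` of `S` is continuous, and
the random (conditional bootstrap) distribution functions `F_n` satisfy
`sup_x |F_n(x) − F(x)| → 0` in probability, then for every `α ∈ (0,1)`,
`Pr(S_n ≥ F_n⁻¹(1−α)) → α` as `n → ∞`, where `F_n⁻¹` is the generalized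
inverse `F_n⁻¹(y) = inf{x : F_n(x) ≥ y}`. -/
theorem stmt13 {Ω : Type*} [MeasurableSpace Ω]
    (Pr : Measure Ω) [IsProbabilityMeasure Pr]
    (Sn : ℕ → Ω → ℝ) (hSn : ∀ n, Measurable (Sn n))
    (μ : Measure ℝ) [IsProbabilityMeasure μ] (F : ℝ → ℝ)
    (hF : ∀ x, F x = (μ (Set.Iic x)).toReal) (hFcont : Continuous F)
    (hweak : ∀ g : ℝ →ᵇ ℝ,
      Tendsto (fun n => ∫ ω, g (Sn n ω) ∂Pr) atTop (𝓝 (∫ x, g x ∂μ)))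
    (Fn : ℕ → Ω → ℝ → ℝ)
    (hFnmono : ∀ n ω, Monotone (Fn n ω))
    (hFn01 : ∀ n ω x, Fn n ω x ∈ Set.Icc (0 : ℝ) 1)
    (hFnbot : ∀ n ω, Tendsto (Fn n ω) atBot (𝓝 0))
    (hFntop : ∀ n ω, Tendsto (Fn n ω) atTop (𝓝 1))
    (hFnmeas : ∀ n (y : ℝ), Measurable fun ω => sInf {x : ℝ | y ≤ Fn n ω x})
    (hsup : TendstoInMeasure Pr
      (fun n ω => ⨆ x : ℝ, |Fn n ω x - F x|) atTop (fun _ => 0))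
    (α : ℝ) (hα : α ∈ Set.Ioo (0 : ℝ) 1) :
    Tendsto (fun n =>
        (Pr {ω | sInf {x : ℝ | 1 - α ≤ Fn n ω x} ≤ Sn n ω}).toReal)
      atTop (𝓝 α) :=
  stmt13_general Pr Sn hSn μ F hF hFcont hweak Fn hFn01 hsup α hα
end
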